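/- With A_mat as the 2×2 matrix cI₂ + d·vvᵀ where c = 2A²NP₁/(σ²(A²|a|+1)), d = A⁴N/(|a|²(A²|a|+1)²), v = (Re(a), Im(a))ᵀ, |v|² = |a|², the sum of the first two diagonal entries of A_mat⁻¹ equals (4σ²P₁(A²|a|+1)² + σ⁴A²(A²|a|+1)) / (4NA²P₁²(A²|a|+1) + 2Nσ²A⁴P₁). -/

import Mathlib

/-!
Sherman–Morrison for a scalar plus a rank-one matrix: since `(u vᵀ)² = (vᵀu) u vᵀ`,
`(c I + d u vᵀ)⁻¹ = c⁻¹ (I - d / (c + d vᵀu) u vᵀ)`, whose trace is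
`(n c + (n - 1) d vᵀu) / (c (c + d vᵀu))`. For `n = 2` and `v = u = (Re a, Im a)`, so that
`vᵀv = ‖a‖²`, substituting `c` and `d` gives the stated value.
-/

open Matrix

namespace Matrix

variable {n K : Type*} [Fintype n] [DecidableEq n] [Field K]

theorem inv_smul_one_add_smul_vecMulVec {c d : K} (u v : n → K) (hc : c ≠ 0)
    (hcd : c + d * (v ⬝ᵥ u) ≠ 0) :
    (c • (1 : Matrix n n K) + d • vecMulVec u v)⁻¹ =
      c⁻¹ • (1 - (d / (c + d * (v ⬝ᵥ u))) • vecMulVec u v) := by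
  refine inv_eq_right_inv ?_
  have hsq : vecMulVec u v * vecMulVec u v = (v ⬝ᵥ u) • vecMulVec u v := by
    rw [vecMulVec_mul_vecMulVec, vecMulVec_smul]
  simp only [add_mul, mul_sub, mul_smul_comm, smul_mul_assoc, mul_one, one_mul, hsq, smul_sub,
    smul_smul]
  match_scalars
  · field_simp
  · field_simp
    ring

theorem trace_inv_smul_one_add_smul_vecMulVec {c d : K} (u v : n → K) (hc : c ≠ 0)
    (hcd : c + d * (v ⬝ᵥ u) ≠ 0) :
    (c • (1 : Matrix n n K) + d • vecMulVec u v)⁻¹.trace =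
      (Fintype.card n * c + (Fintype.card n - 1) * d * (v ⬝ᵥ u)) / (c * (c + d * (v ⬝ᵥ u))) := by
  rw [inv_smul_one_add_smul_vecMulVec u v hc hcd, trace_smul, trace_sub, trace_smul, trace_one,
    trace_vecMulVec, dotProduct_comm u v, smul_eq_mul, smul_eq_mul]
  field_simp
  ring

end Matrix

theorem stmt10 (a : ℂ) (ha : a ≠ 0) (A P₁ σ2 : ℝ)
    (hA : 0 < A) (hP₁ : 0 < P₁) (hσ : 0 < σ2) (N : ℕ) (hN : 1 ≤ N)
    (c d : ℝ) (v : Fin 2 → ℝ)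
    (hc : c = 2 * A ^ 2 * N * P₁ / (σ2 * (A ^ 2 * ‖a‖ + 1)))
    (hd : d = A ^ 4 * N / (‖a‖ ^ 2 * (A ^ 2 * ‖a‖ + 1) ^ 2))
    (hv : v = ![a.re, a.im])
    (Amat : Matrix (Fin 2) (Fin 2) ℝ)
    (hAmat : Amat = c • (1 : Matrix (Fin 2) (Fin 2) ℝ)
        + d • (Matrix.of fun i j => v i * v j)) :
    Amat⁻¹ 0 0 + Amat⁻¹ 1 1 =
      (4 * σ2 * P₁ * (A ^ 2 * ‖a‖ + 1) ^ 2
          + σ2 ^ 2 * A ^ 2 * (A ^ 2 * ‖a‖ + 1)) /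
        (4 * N * A ^ 2 * P₁ ^ 2 * (A ^ 2 * ‖a‖ + 1)
          + 2 * N * σ2 * A ^ 4 * P₁) := by
  have hvv : v ⬝ᵥ v = ‖a‖ ^ 2 := by
    rw [hv, Complex.sq_norm, Complex.normSq_apply]
    simp [dotProduct]
  have ha_pos : 0 < ‖a‖ := norm_pos_iff.mpr ha
  have hN_pos : (0 : ℝ) < N := by exact_mod_cast hN
  have hc0 : 0 < c := by rw [hc]; positivity
  have hd0 : 0 < d := by rw [hd]; positivity
  have hAmat' : Amat = c • 1 + d • vecMulVec v v := hAmat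
  rw [← trace_fin_two, hAmat',
    trace_inv_smul_one_add_smul_vecMulVec v v hc0.ne' (by rw [hvv]; positivity), hvv,
    Fintype.card_fin, hc, hd]
  field_simp
  ring
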